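/- arXiv:1309.1449 — 2 statements merged into one kernel-verified Lean document; each statement's English description precedes it below -/
import Mathlib

section
/- Let {ρ} be a sequence of complex numbers contained in a translated cone α + C(θ_1, θ_2) with π/2 < θ_1 < θ_2 < 3π/2 and α ∈ ℝ, where C(θ_1,θ_2) = {s : θ_1 < arg s < θ_2}, and let n_ρ be integers with ∑ |n_ρ| |ρ|^{-d} < ∞ for some d. Then the series W(t) = ∑_ρ n_ρ e^{ρt} converges to a holomorphic function of t on the cone C(π/2 - θ_1, 3π/2 - θ_2). -/
/-! For `t = r' e^{iφ}` in `C(π/2 - θ₁, 3π/2 - θ₂)` and `s = r e^{iθ}` in `C(θ₁, θ₂)`, the angle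
`θ + φ` ranges over a closed subinterval of `(π/2, 3π/2)`, so `Re (s t) ≤ -ε |s|` for some `ε > 0`
independent of `s`; for `t'` within `ε/2` of `t` the bound survives with `ε/2`. On that ball
`|n_ρ e^{ρ t'}| ≤ e^{|α| |t'|} |n_ρ| e^{-ε |ρ - α| / 2}`, and exponential decay beats the power
`|ρ|^d`, so the terms are dominated by a constant times `|n_ρ| |ρ|^{-d}`. The Weierstrass M-test
then gives convergence and holomorphy. -/

open Complex

/-- Membership in the open cone `C(θ₁, θ₂) = {s ≠ 0 : θ₁ < arg s < θ₂}` (angles measured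
without normalization, so that `θ₂` may exceed `π`). -/
def InCone (θ₁ θ₂ : ℝ) (s : ℂ) : Prop :=
  ∃ r : ℝ, 0 < r ∧ ∃ θ : ℝ, θ₁ < θ ∧ θ < θ₂ ∧ s = r * Complex.exp (Complex.I * θ)

lemma cos_le_max_cos_of_mem_Icc {a b x : ℝ} (ha : 0 ≤ a) (hb : b ≤ 2 * Real.pi)
    (hax : a ≤ x) (hxb : x ≤ b) : Real.cos x ≤ max (Real.cos a) (Real.cos b) := by
  rcases le_total x Real.pi with hx | hx
  · exact le_max_of_le_left (Real.cos_le_cos_of_nonneg_of_le_pi ha hx hax)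
  · refine le_max_of_le_right ?_
    rw [← Real.cos_two_pi_sub x, ← Real.cos_two_pi_sub b]
    exact Real.cos_le_cos_of_nonneg_of_le_pi (by linarith) (by linarith) (by linarith)

lemma re_polar_mul_polar (r θ r' φ : ℝ) :
    (r * exp (I * θ) * (r' * exp (I * φ))).re = r * r' * Real.cos (θ + φ) := by
  have : (r : ℂ) * exp (I * θ) * (r' * exp (I * φ))
      = ((r * r' : ℝ) : ℂ) * exp (((θ + φ : ℝ) : ℂ) * I) := by
    push_cast
    rw [add_mul, exp_add, mul_comm (θ : ℂ), mul_comm (φ : ℂ)]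
    ring
  rw [this, re_ofReal_mul, exp_ofReal_mul_I_re]

theorem exists_pos_re_mul_le_neg_mul_norm {θ₁ θ₂ : ℝ} (hθ : θ₁ ≤ θ₂) {t : ℂ}
    (ht : InCone (Real.pi / 2 - θ₁) (3 * Real.pi / 2 - θ₂) t) :
    ∃ ε > 0, ∀ s, InCone θ₁ θ₂ s → (s * t).re ≤ -ε * ‖s‖ := by
  obtain ⟨r', hr', φ, hφ₁, hφ₂, rfl⟩ := ht
  set m := max (Real.cos (θ₁ + φ)) (Real.cos (θ₂ + φ))
  have hm : m < 0 :=
    max_lt (Real.cos_neg_of_pi_div_two_lt_of_lt (by linarith) (by linarith))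
      (Real.cos_neg_of_pi_div_two_lt_of_lt (by linarith) (by linarith))
  refine ⟨-(r' * m), by nlinarith, ?_⟩
  rintro s ⟨r, hr, θ, hθ₁, hθ₂, rfl⟩
  have hcos : Real.cos (θ + φ) ≤ m :=
    cos_le_max_cos_of_mem_Icc (by linarith) (by linarith) (by linarith) (by linarith)
  have hnorm : ‖(r : ℂ) * exp (I * θ)‖ = r := by simp [norm_exp, abs_of_pos hr]
  rw [re_polar_mul_polar, hnorm]
  nlinarith [mul_le_mul_of_nonneg_left hcos (mul_pos hr hr').le]

lemma re_mul_le_of_norm_sub_le {s t t₀ : ℂ} {ε δ : ℝ} (h : (s * t₀).re ≤ -ε * ‖s‖)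
    (ht : ‖t - t₀‖ ≤ δ) : (s * t).re ≤ -(ε - δ) * ‖s‖ := by
  have hpert : (s * (t - t₀)).re ≤ ‖s‖ * δ :=
    calc (s * (t - t₀)).re ≤ ‖s * (t - t₀)‖ := re_le_norm _
      _ = ‖s‖ * ‖t - t₀‖ := norm_mul _ _
      _ ≤ ‖s‖ * δ := mul_le_mul_of_nonneg_left ht (norm_nonneg _)
  have hsplit : (s * t).re = (s * t₀).re + (s * (t - t₀)).re := by rw [← add_re]; ring_nf
  linarith

lemma pow_mul_exp_neg_mul_le {x c : ℝ} (hx : 0 ≤ x) (hc : 0 < c) (d : ℕ) :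
    x ^ d * Real.exp (-(c * x)) ≤ d.factorial / c ^ d :=
  calc x ^ d * Real.exp (-(c * x))
      = (c * x) ^ d / d.factorial * Real.exp (-(c * x)) * (d.factorial / c ^ d) := by
        field_simp; ring
    _ ≤ Real.exp (c * x) * Real.exp (-(c * x)) * (d.factorial / c ^ d) := by
        gcongr; exact Real.pow_div_factorial_le_exp _ (by positivity) d
    _ = d.factorial / c ^ d := by rw [← Real.exp_add, add_neg_cancel, Real.exp_zero, one_mul]

lemma norm_pow_mul_exp_neg_mul_norm_sub_le {E : Type*} [SeminormedAddCommGroup E] (z w : E)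
    {c : ℝ} (hc : 0 < c) (d : ℕ) :
    ‖z‖ ^ d * Real.exp (-(c * ‖z - w‖)) ≤ d.factorial / c ^ d * Real.exp (c * ‖w‖) := by
  set y := ‖z - w‖ + ‖w‖
  have hz : ‖z‖ ≤ y := norm_le_norm_sub_add z w
  calc ‖z‖ ^ d * Real.exp (-(c * ‖z - w‖)) ≤ y ^ d * Real.exp (-(c * y)) * Real.exp (c * ‖w‖) := by
        rw [mul_assoc, ← Real.exp_add]
        gcongr
        exact le_of_eq (by ring)
    _ ≤ d.factorial / c ^ d * Real.exp (c * ‖w‖) := by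
        gcongr
        exact pow_mul_exp_neg_mul_le (by positivity) hc d

lemma norm_exp_mul_le {ρ w t : ℂ} {c : ℝ} (h : ((ρ - w) * t).re ≤ -c * ‖ρ - w‖) :
    ‖exp (ρ * t)‖ ≤ Real.exp (‖w‖ * ‖t‖) * Real.exp (-(c * ‖ρ - w‖)) := by
  rw [norm_exp, ← Real.exp_add]
  gcongr
  have hw : (w * t).re ≤ ‖w‖ * ‖t‖ := (re_le_norm _).trans (norm_mul _ _).le
  have hsplit : (ρ * t).re = ((ρ - w) * t).re + (w * t).re := by rw [← add_re]; ring_nf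
  linarith

theorem exists_ball_norm_mul_exp_le {ι : Type*} {θ₁ θ₂ : ℝ} (hθ : θ₁ ≤ θ₂) {w : ℂ}
    {ρ : ι → ℂ} (a : ι → ℂ) (d : ℕ) (hρ : ∀ j, InCone θ₁ θ₂ (ρ j - w)) (hρ0 : ∀ j, ρ j ≠ 0) {t₀ : ℂ}
    (ht₀ : InCone (Real.pi / 2 - θ₁) (3 * Real.pi / 2 - θ₂) t₀) :
    ∃ δ > 0, ∃ K, ∀ j, ∀ t ∈ Metric.ball t₀ δ,
      ‖a j * exp (ρ j * t)‖ ≤ K * (‖a j‖ / ‖ρ j‖ ^ d) := by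
  obtain ⟨ε, hε, hre⟩ := exists_pos_re_mul_le_neg_mul_norm hθ ht₀
  set δ := ε / 2
  set M := d.factorial / δ ^ d * Real.exp (δ * ‖w‖)
  set B := Real.exp (‖w‖ * (‖t₀‖ + δ))
  refine ⟨δ, by positivity, B * M, fun j t ht => ?_⟩
  have hdist : ‖t - t₀‖ ≤ δ := (mem_ball_iff_norm.mp ht).le
  have hρt : ((ρ j - w) * t).re ≤ -δ * ‖ρ j - w‖ := by
    have := re_mul_le_of_norm_sub_le (hre _ (hρ j)) hdist
    rwa [show ε - δ = δ by ring] at this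
  have hB : Real.exp (‖w‖ * ‖t‖) ≤ B :=
    Real.exp_le_exp.mpr <| mul_le_mul_of_nonneg_left
      ((norm_le_norm_add_norm_sub' t t₀).trans (by linarith)) (norm_nonneg w)
  have hpow : 0 < ‖ρ j‖ ^ d := pow_pos (norm_pos_iff.mpr (hρ0 j)) d
  have hdecay : Real.exp (-(δ * ‖ρ j - w‖)) ≤ M / ‖ρ j‖ ^ d := by
    rw [le_div_iff₀ hpow, mul_comm]
    exact norm_pow_mul_exp_neg_mul_norm_sub_le _ _ (by positivity) d
  calc ‖a j * exp (ρ j * t)‖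
      ≤ ‖a j‖ * (B * (M / ‖ρ j‖ ^ d)) := by
        rw [norm_mul]
        gcongr
        exact (norm_exp_mul_le hρt).trans (by gcongr)
    _ = B * M * (‖a j‖ / ‖ρ j‖ ^ d) := by ring

theorem newton_cramer_holomorphic_on_cone_general (α : ℝ) (θ₁ θ₂ : ℝ)
    (hθ₁₂ : θ₁ < θ₂)
    (ρ : ℕ → ℂ) (n : ℕ → ℤ) (d : ℕ)
    (hρ : ∀ j, InCone θ₁ θ₂ (ρ j - α))
    (hρ0 : ∀ j, ρ j ≠ 0)
    (hsum : Summable (fun j => (|n j| : ℝ) / ‖ρ j‖ ^ d)) :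
    (∀ t : ℂ, InCone (Real.pi / 2 - θ₁) (3 * Real.pi / 2 - θ₂) t →
      Summable (fun j => (n j : ℂ) * Complex.exp (ρ j * t))) ∧
    DifferentiableOn ℂ (fun t => ∑' j : ℕ, (n j : ℂ) * Complex.exp (ρ j * t))
      {t : ℂ | InCone (Real.pi / 2 - θ₁) (3 * Real.pi / 2 - θ₂) t} := by
  have hsum' : Summable fun j => ‖(n j : ℂ)‖ / ‖ρ j‖ ^ d := by
    simpa only [norm_intCast] using hsum
  have local_bound := fun t₀ (ht₀ : InCone (Real.pi / 2 - θ₁) (3 * Real.pi / 2 - θ₂) t₀) =>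
    exists_ball_norm_mul_exp_le hθ₁₂.le (fun j => (n j : ℂ)) d hρ hρ0 ht₀
  refine ⟨fun t ht => ?_, fun t₀ ht₀ => ?_⟩
  · obtain ⟨δ, hδ, K, hK⟩ := local_bound t ht
    exact Summable.of_norm_bounded (hsum'.mul_left K) fun j => hK j t (Metric.mem_ball_self hδ)
  · obtain ⟨δ, hδ, K, hK⟩ := local_bound t₀ ht₀
    have hdiff : DifferentiableOn ℂ (fun t => ∑' j, (n j : ℂ) * exp (ρ j * t))
        (Metric.ball t₀ δ) :=
      differentiableOn_tsum_of_summable_norm (hsum'.mul_left K) (fun j => by fun_prop)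
        Metric.isOpen_ball hK
    exact (hdiff.differentiableAt (Metric.ball_mem_nhds t₀ hδ)).differentiableWithinAt

/-- If the points `ρ_j` (with integer multiplicities `n_j`) all lie in a translated left
cone `α + C(θ₁, θ₂)` with `π/2 < θ₁ < θ₂ < 3π/2`, and `∑ |n_j| |ρ_j|^{-d} < ∞`, then
`W(t) = ∑_j n_j e^{ρ_j t}` converges for every `t` in the cone `C(π/2-θ₁, 3π/2-θ₂)`
and defines a holomorphic function there. -/
theorem newton_cramer_holomorphic_on_cone (α : ℝ) (θ₁ θ₂ : ℝ)
    (hθ₁ : Real.pi / 2 < θ₁) (hθ₁₂ : θ₁ < θ₂) (hθ₂ : θ₂ < 3 * Real.pi / 2)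
    (ρ : ℕ → ℂ) (n : ℕ → ℤ) (d : ℕ)
    (hρ : ∀ j, InCone θ₁ θ₂ (ρ j - α))
    (hρ0 : ∀ j, ρ j ≠ 0)
    (hsum : Summable (fun j => (|n j| : ℝ) / ‖ρ j‖ ^ d)) :
    (∀ t : ℂ, InCone (Real.pi / 2 - θ₁) (3 * Real.pi / 2 - θ₂) t →
      Summable (fun j => (n j : ℂ) * Complex.exp (ρ j * t))) ∧
    DifferentiableOn ℂ (fun t => ∑' j : ℕ, (n j : ℂ) * Complex.exp (ρ j * t))
      {t : ℂ | InCone (Real.pi / 2 - θ₁) (3 * Real.pi / 2 - θ₂) t} :=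
  newton_cramer_holomorphic_on_cone_general α θ₁ θ₂ hθ₁₂ ρ n d hρ hρ0 hsum
end

section
/- Let F : ℂ → ℂ be continuous on the closed half-plane Re s ≥ c and satisfy |F(s)| ≤ C|s|^{m_0 - 2} there for some m_0 ≥ 2. Then L(t) = ∫_{-∞}^{∞} F(c+iu)/(c+iu)^{m_0} · e^{(c+iu)t} du/(2π) defines a continuous function of t ∈ ℝ, and if F is moreover holomorphic on Re s > c' for some c' < c with the same bound, then L(t) = 0 for all t < 0. -/
/-!
On the line `Re s = c` the integrand is bounded by `C e^{ct} / (c² + u²)`, which gives absolute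
convergence and, after pulling out `e^{ct}`, continuity in `t` by dominated convergence. For
`t < 0` the function `s ↦ F s / s^m₀ · e^{st}` is holomorphic on `Re s ≥ c` with the same
`O(|s|⁻²)` bound, so by Cauchy's theorem on rectangles whose horizontal sides vanish in the limit
the line integral does not depend on the abscissa `b ≥ c`; as `b → ∞` it is `O(e^{bt}) → 0`.
-/

open Complex MeasureTheory Filter Set Topology

lemma norm_div_pow_le_div_sq {𝕜 : Type*} [NormedDivisionRing 𝕜] {w s : 𝕜} {C : ℝ} {m : ℕ}
    (hm : 2 ≤ m) (hw : ‖w‖ ≤ C * ‖s‖ ^ (m - 2)) : ‖w / s ^ m‖ ≤ C / ‖s‖ ^ 2 := by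
  rcases eq_or_ne s 0 with rfl | hs
  · simp [zero_pow (by omega : m ≠ 0)]
  have hpos : 0 < ‖s‖ ^ (m - 2) := pow_pos (norm_pos_iff.mpr hs) _
  calc ‖w / s ^ m‖ = ‖w‖ / (‖s‖ ^ (m - 2) * ‖s‖ ^ 2) := by
        rw [norm_div, norm_pow, ← pow_add, Nat.sub_add_cancel hm]
    _ ≤ C * ‖s‖ ^ (m - 2) / (‖s‖ ^ (m - 2) * ‖s‖ ^ 2) := by gcongr
    _ = C / ‖s‖ ^ 2 := by field_simp

lemma norm_ofReal_add_mul_I_sq (x y : ℝ) : ‖(x : ℂ) + y * I‖ ^ 2 = x ^ 2 + y ^ 2 := by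
  rw [Complex.sq_norm, normSq_add_mul_I]

lemma div_norm_sq_le_div_sq_add_sq {a x C : ℝ} (hC : 0 ≤ C) (ha : 0 < a) (hx : a ≤ x) (y : ℝ) :
    C / ‖(x : ℂ) + y * I‖ ^ 2 ≤ C / (a ^ 2 + y ^ 2) := by
  rw [norm_ofReal_add_mul_I_sq]
  gcongr

lemma integrable_div_sq_add_sq {a : ℝ} (ha : a ≠ 0) (C : ℝ) :
    Integrable fun u : ℝ => C / (a ^ 2 + u ^ 2) := by
  refine ((integrable_inv_one_add_sq.comp_div ha).const_mul (C / a ^ 2)).congr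
    (Eventually.of_forall fun u => ?_)
  field_simp

variable {E : Type*} [NormedAddCommGroup E]

lemma integrable_vertical_of_norm_le_div_sq {f : ℂ → E} {a C : ℝ} (ha : a ≠ 0)
    (hf : Continuous fun u : ℝ => f (a + u * I))
    (hbound : ∀ u : ℝ, ‖f (a + u * I)‖ ≤ C / ‖(a : ℂ) + u * I‖ ^ 2) :
    Integrable fun u : ℝ => f (a + u * I) :=
  (integrable_div_sq_add_sq ha C).mono' hf.aestronglyMeasurable
    (Eventually.of_forall fun u => by simpa only [norm_ofReal_add_mul_I_sq] using hbound u)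

section

variable [NormedSpace ℂ E]

noncomputable def verticalIntegral (f : ℂ → E) (a : ℝ) : E := ∫ u : ℝ, f (a + u * I)

theorem verticalIntegral_eq_of_integrable_of_tendsto [CompleteSpace E] {f : ℂ → E} {a b : ℝ}
    (hab : a ≤ b) (hf : DifferentiableOn ℂ f (re ⁻¹' Icc a b))
    (ha : Integrable fun u : ℝ => f (a + u * I)) (hb : Integrable fun u : ℝ => f (b + u * I))
    (hhor : Tendsto (fun y : ℝ => ∫ x in a..b, f (x + y * I)) (cocompact ℝ) (𝓝 0)) :
    verticalIntegral f a = verticalIntegral f b := by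
  have hrect : ∀ R : ℝ, (∫ x in a..b, f (x + (-R : ℝ) * I)) - (∫ x in a..b, f (x + R * I)) +
      I • (∫ y in -R..R, f (b + y * I)) - I • (∫ y in -R..R, f (a + y * I)) = 0 := fun R => by
    have := integral_boundary_rect_eq_zero_of_differentiableOn f (a + (-R : ℝ) * I) (b + R * I)
      (hf.mono fun s hs => by simpa [uIcc_of_le hab] using hs.1)
    simpa using this
  have hlim := ((hhor.comp (tendsto_neg_atTop_atBot.mono_right atBot_le_cocompact)).sub
    (hhor.mono_left atTop_le_cocompact)).add
    ((intervalIntegral_tendsto_integral hb tendsto_neg_atTop_atBot tendsto_id).const_smul I) |>.sub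
    ((intervalIntegral_tendsto_integral ha tendsto_neg_atTop_atBot tendsto_id).const_smul I)
  have h0 := tendsto_nhds_unique (hlim.congr hrect) tendsto_const_nhds
  rw [sub_zero, zero_add, ← smul_sub, smul_eq_zero, sub_eq_zero] at h0
  exact (h0.resolve_left I_ne_zero).symm

theorem verticalIntegral_eq_of_norm_le_div_sq [CompleteSpace E] {f : ℂ → E} {a b C : ℝ}
    (ha : 0 < a) (hab : a ≤ b) (hC : 0 ≤ C) (hf : DifferentiableOn ℂ f (re ⁻¹' Icc a b))
    (hbound : ∀ s ∈ re ⁻¹' Icc a b, ‖f s‖ ≤ C / ‖s‖ ^ 2) :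
    verticalIntegral f a = verticalIntegral f b := by
  have hint : ∀ x ∈ Icc a b, Integrable fun u : ℝ => f (x + u * I) := fun x hx =>
    integrable_vertical_of_norm_le_div_sq (ha.trans_le hx.1).ne'
      (hf.continuousOn.comp_continuous (by fun_prop) fun u => by simpa using hx)
      fun u => hbound _ (by simpa using hx)
  have hhor : Tendsto (fun y : ℝ => ∫ x in a..b, f (x + y * I)) (cocompact ℝ) (𝓝 0) := by
    have hsq : Tendsto (fun y : ℝ => a ^ 2 + y ^ 2) (cocompact ℝ) atTop :=
      tendsto_atTop_add_const_left _ _ <|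
        ((tendsto_pow_atTop two_ne_zero).comp tendsto_norm_cocompact_atTop).congr sq_abs
    refine squeeze_zero_norm (fun y => intervalIntegral.norm_integral_le_of_norm_le_const
      fun x hx => ?_) (by simpa using ((tendsto_const_nhds (x := C)).div_atTop hsq).mul_const |b - a|)
    rw [uIoc_of_le hab] at hx
    exact (hbound _ (by simpa using Ioc_subset_Icc_self hx)).trans
      (div_norm_sq_le_div_sq_add_sq hC ha hx.1.le y)
  exact verticalIntegral_eq_of_integrable_of_tendsto hab hf (hint a ⟨le_rfl, hab⟩)
    (hint b ⟨hab, le_rfl⟩) hhor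

end

lemma continuous_integral_mul_cexp_mul_I {g : ℝ → ℂ} (hg : Integrable g) :
    Continuous fun t : ℝ => ∫ u, g u * cexp (u * t * I) :=
  continuous_of_dominated
    (fun t => hg.aestronglyMeasurable.mul (by fun_prop : Continuous fun u : ℝ =>
      cexp (u * t * I)).aestronglyMeasurable)
    (fun t => Eventually.of_forall fun u => by
      rw [norm_mul, ← ofReal_mul, norm_exp_ofReal_mul_I, mul_one])
    hg.norm (Eventually.of_forall fun u => by fun_prop)

lemma norm_mul_cexp_ofReal_mul (z s : ℂ) (t : ℝ) :
    ‖z * cexp (s * t)‖ = ‖z‖ * Real.exp (s.re * t) := by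
  simp [norm_exp]

theorem continuous_verticalIntegral_mul_cexp {G : ℂ → ℂ} {c C : ℝ} (hc : 0 < c)
    (hGc : ContinuousOn G {s | c ≤ s.re}) (hG : ∀ s : ℂ, c ≤ s.re → ‖G s‖ ≤ C / ‖s‖ ^ 2) :
    Continuous fun t : ℝ => verticalIntegral (fun s => G s * cexp (s * t)) c := by
  have hint := integrable_vertical_of_norm_le_div_sq hc.ne'
    (hGc.comp_continuous (by fun_prop) fun u => by simp) fun u => hG _ (by simp)
  have hfactor : ∀ t u : ℝ, G (c + u * I) * cexp ((c + u * I) * t) =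
      cexp (c * t) * (G (c + u * I) * cexp (u * t * I)) := by
    intro t u
    rw [mul_left_comm, ← Complex.exp_add]
    ring_nf
  simp only [verticalIntegral, hfactor, integral_const_mul]
  exact (by fun_prop : Continuous fun t : ℝ => cexp (c * t)).mul
    (continuous_integral_mul_cexp_mul_I hint)

theorem verticalIntegral_mul_cexp_eq_zero {G : ℂ → ℂ} {c C t : ℝ} (hc : 0 < c) (hC : 0 ≤ C)
    (hGd : DifferentiableOn ℂ G {s | c ≤ s.re})
    (hG : ∀ s : ℂ, c ≤ s.re → ‖G s‖ ≤ C / ‖s‖ ^ 2) (ht : t < 0) :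
    verticalIntegral (fun s => G s * cexp (s * t)) c = 0 := by
  set f : ℂ → ℂ := fun s => G s * cexp (s * t)
  have hfd : DifferentiableOn ℂ f {s | c ≤ s.re} :=
    hGd.mul (by fun_prop : Differentiable ℂ fun s : ℂ => cexp (s * t)).differentiableOn
  have hf : ∀ s : ℂ, c ≤ s.re → ‖f s‖ ≤ C * Real.exp (c * t) / ‖s‖ ^ 2 := fun s hs => by
    rw [norm_mul_cexp_ofReal_mul, mul_div_right_comm]
    exact mul_le_mul (hG s hs) (Real.exp_le_exp.mpr (by nlinarith)) (Real.exp_nonneg _)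
      ((norm_nonneg _).trans (hG s hs))
  have hshift : ∀ b, c ≤ b → verticalIntegral f c = verticalIntegral f b := fun b hcb =>
    verticalIntegral_eq_of_norm_le_div_sq hc hcb (by positivity) (hfd.mono fun s hs => hs.1)
      fun s hs => hf s hs.1
  have hdecay : Tendsto (verticalIntegral f) atTop (𝓝 0) := by
    refine squeeze_zero_norm' ?_ (by simpa using ((Real.tendsto_exp_atBot.comp
      (tendsto_id.atTop_mul_const_of_neg ht)).mul_const (∫ u : ℝ, C / (c ^ 2 + u ^ 2))))
    filter_upwards [eventually_ge_atTop c] with b hcb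
    rw [← integral_const_mul]
    refine norm_integral_le_of_norm_le ((integrable_div_sq_add_sq hc.ne' C).const_mul _)
      (Eventually.of_forall fun u => ?_)
    rw [norm_mul_cexp_ofReal_mul, show ((b : ℂ) + u * I).re = b by simp, mul_comm]
    gcongr
    exact (hG _ (by simpa using hcb)).trans (div_norm_sq_le_div_sq_add_sq hC hc hcb u)
  exact tendsto_nhds_unique (tendsto_const_nhds.congr' ((eventually_ge_atTop c).mono hshift))
    hdecay

/-- Let `F` be continuous on the closed half-plane `Re s ≥ c` (with `c > 0`) and satisfy
`|F(s)| ≤ C|s|^{m₀-2}` there, for some `m₀ ≥ 2`. Then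
`L(t) = ∫ F(c+iu)/(c+iu)^{m₀} e^{(c+iu)t} du/(2π)` is a continuous function of `t ∈ ℝ`,
and if moreover `F` is holomorphic on `Re s > c'` for some `c' < c` with the same bound,
then `L(t) = 0` for all `t < 0`. -/
theorem inverse_laplace_kernel (F : ℂ → ℂ) (c C : ℝ) (hc : 0 < c) (m₀ : ℕ) (hm : 2 ≤ m₀)
    (hF : ContinuousOn F {s : ℂ | c ≤ s.re})
    (hbound : ∀ s : ℂ, c ≤ s.re → ‖F s‖ ≤ C * ‖s‖ ^ (m₀ - 2))
    (L : ℝ → ℂ)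
    (hL : ∀ t : ℝ, L t = (1 / (2 * Real.pi)) *
      ∫ u : ℝ, F (c + u * Complex.I) / (c + u * Complex.I) ^ m₀ *
        Complex.exp ((c + u * Complex.I) * t)) :
    Continuous L ∧
    (∀ c' : ℝ, c' < c →
      DifferentiableOn ℂ F {s : ℂ | c' < s.re} →
      (∀ s : ℂ, c' < s.re → ‖F s‖ ≤ C * ‖s‖ ^ (m₀ - 2)) →
      ∀ t : ℝ, t < 0 → L t = 0) := by
  have hL' : L = fun t : ℝ =>
      1 / (2 * Real.pi) * verticalIntegral (fun s => F s / s ^ m₀ * cexp (s * t)) c := funext hL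
  have hG : ∀ s : ℂ, c ≤ s.re → ‖F s / s ^ m₀‖ ≤ C / ‖s‖ ^ 2 := fun s hs =>
    norm_div_pow_le_div_sq hm (hbound s hs)
  have hC : 0 ≤ C := by
    refine nonneg_of_mul_nonneg_left ((norm_nonneg _).trans (hbound c (by simp))) ?_
    simpa [abs_of_pos hc] using pow_pos hc (m₀ - 2)
  have hpow : ∀ s ∈ {s : ℂ | c ≤ s.re}, s ^ m₀ ≠ 0 := fun s hs =>
    pow_ne_zero _ (ne_of_apply_ne re (hc.trans_le hs).ne')
  refine ⟨hL' ▸ continuous_const.mul (continuous_verticalIntegral_mul_cexp hc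
    (hF.div (continuousOn_pow m₀) hpow) hG), fun c' hc' hdiff _ t ht => ?_⟩
  have hGd : DifferentiableOn ℂ (fun s => F s / s ^ m₀) {s : ℂ | c ≤ s.re} :=
    (hdiff.mono fun s hs => hc'.trans_le hs).div (differentiableOn_pow m₀) hpow
  simp only [hL', verticalIntegral_mul_cexp_eq_zero hc hC hGd hG ht, mul_zero]
end
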